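/- (Deduction theorem) For every theory Σ and all finite subsets A, B of T_Y, the following are equivalent: (1) Σ ∪ {∅ ⇒ A} ⊢ ∅ ⇒ B; (2) there exist finitely many integers i_1, …, i_n ∈ ℤ such that Σ ⊢ ⋃_{m=1}^n (A + i_m) ⇒ B. -/

import Mathlib

/-!
Every use of the extra fact `∅ ⇒ A` in a proof from `Σ ∪ {∅ ⇒ A}` can be traded for an extra
premise: by induction on the proof, `Σ ∪ {∅ ⇒ A} ⊢ C ⇒ D` yields a finite `I ⊆ ℤ` with
`Σ ⊢ C ∪ ⋃_{i ∈ I} (A + i) ⇒ D`. The fact itself needs `I = {0}`, a cut takes the union of the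
two index sets, and a shift by `i` shifts the index set by `i`. Conversely, (Shf) applied to
`∅ ⇒ A` proves `∅ ⇒ A + i` for every `i`, and a cut removes the premise again.
-/

namespace TAI

variable {Y : Type*}

/-- Time shift of a set of time-annotated attributes: `M + j`. -/
def shiftS (M : Set (Y × ℤ)) (j : ℤ) : Set (Y × ℤ) :=
  (fun p : Y × ℤ => (p.1, p.2 + j)) '' M

/-- Time shift of a finite set of time-annotated attributes: `A + j`. -/
def shiftF [DecidableEq Y] (A : Finset (Y × ℤ)) (j : ℤ) : Finset (Y × ℤ) :=
  A.image (fun p => (p.1, p.2 + j))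

/-- An attribute implication over `Y` annotated by time points: a pair
`(A, B)` of finite subsets of `T_Y = Y × ℤ`, read as `A ⇒ B`. -/
abbrev Fml (Y : Type*) := Finset (Y × ℤ) × Finset (Y × ℤ)

/-- `A ⇒ B` is true in `M ⊆ T_Y`: for every `i ∈ ℤ`, `A + i ⊆ M` implies `B + i ⊆ M`. -/
def Holds [DecidableEq Y] (M : Set (Y × ℤ)) (φ : Fml Y) : Prop :=
  ∀ i : ℤ, ↑(shiftF φ.1 i) ⊆ M → ↑(shiftF φ.2 i) ⊆ M

/-- The models of a theory `T`. -/
def Mods [DecidableEq Y] (T : Set (Fml Y)) : Set (Set (Y × ℤ)) :=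
  {M | ∀ φ ∈ T, Holds M φ}

/-- Semantic entailment: `T ⊨ φ`. -/
def Entails [DecidableEq Y] (T : Set (Fml Y)) (φ : Fml Y) : Prop :=
  ∀ M ∈ Mods T, Holds M φ

/-- Semantic closure `[M]_Σ`. -/
def semClos [DecidableEq Y] (T : Set (Fml Y)) (M : Set (Y × ℤ)) : Set (Y × ℤ) :=
  ⋂₀ {N | N ∈ Mods T ∧ M ⊆ N}

/-- Classical (time-point-free) truth: `M ⊨_PL A ⇒ B` iff `A ⊆ M` implies `B ⊆ M`. -/
def HoldsPL (M : Set (Y × ℤ)) (φ : Fml Y) : Prop :=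
  ↑φ.1 ⊆ M → ↑φ.2 ⊆ M

/-- Classical models. -/
def ModsPL (T : Set (Fml Y)) : Set (Set (Y × ℤ)) :=
  {M | ∀ φ ∈ T, HoldsPL M φ}

/-- Classical semantic entailment `⊨_PL`. -/
def EntailsPL (T : Set (Fml Y)) (φ : Fml Y) : Prop :=
  ∀ M ∈ ModsPL T, HoldsPL M φ

/-- `Σ^PL = {A + i ⇒ B + i | A ⇒ B ∈ Σ, i ∈ ℤ}`. -/
def shiftAll [DecidableEq Y] (T : Set (Fml Y)) : Set (Fml Y) :=
  {ψ | ∃ φ ∈ T, ∃ i : ℤ, ψ = (shiftF φ.1 i, shiftF φ.2 i)}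

/-- One step of the syntactic closure construction. -/
def synStep [DecidableEq Y] (T : Set (Fml Y)) (M : Set (Y × ℤ)) : Set (Y × ℤ) :=
  M ∪ ⋃₀ {S | ∃ φ ∈ T, ∃ i : ℤ, ↑(shiftF φ.1 i) ⊆ M ∧ S = (↑(shiftF φ.2 i) : Set (Y × ℤ))}

/-- `M_Σ^n`. -/
def synIter [DecidableEq Y] (T : Set (Fml Y)) (M : Set (Y × ℤ)) : ℕ → Set (Y × ℤ)
  | 0 => M
  | n + 1 => synStep T (synIter T M n)

/-- The syntactic closure `M_Σ^ω`. -/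
def synClos [DecidableEq Y] (T : Set (Fml Y)) (M : Set (Y × ℤ)) : Set (Y × ℤ) :=
  ⋃ n : ℕ, synIter T M n

/-- Provability from `T` using the rules (Ax), (Cut) and (Shf). -/
inductive Prov [DecidableEq Y] (T : Set (Fml Y)) : Fml Y → Prop
  | hyp {φ : Fml Y} : φ ∈ T → Prov T φ
  | ax (A B : Finset (Y × ℤ)) : Prov T (A ∪ B, A)
  | cut {A B C D : Finset (Y × ℤ)} :
      Prov T (A, B) → Prov T (B ∪ C, D) → Prov T (A ∪ C, D)
  | shf {A B : Finset (Y × ℤ)} (i : ℤ) :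
      Prov T (A, B) → Prov T (shiftF A i, shiftF B i)

/-- Provability from `T` using only the rules (Ax) and (Cut) (no time shifts). -/
inductive ProvAC [DecidableEq Y] (T : Set (Fml Y)) : Fml Y → Prop
  | hyp {φ : Fml Y} : φ ∈ T → ProvAC T φ
  | ax (A B : Finset (Y × ℤ)) : ProvAC T (A ∪ B, A)
  | cut {A B C D : Finset (Y × ℤ)} :
      ProvAC T (A, B) → ProvAC T (B ∪ C, D) → ProvAC T (A ∪ C, D)

/-- Provability from `T` using the rules (Ax) and (Cut_i). -/
inductive ProvCuti [DecidableEq Y] (T : Set (Fml Y)) : Fml Y → Prop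
  | hyp {φ : Fml Y} : φ ∈ T → ProvCuti T φ
  | ax (A B : Finset (Y × ℤ)) : ProvCuti T (A ∪ B, A)
  | cuti {A B C D : Finset (Y × ℤ)} (i : ℤ) :
      ProvCuti T (A, shiftF B i) → ProvCuti T (B ∪ C, D) →
      ProvCuti T (A ∪ shiftF C i, shiftF D i)

/-- Provability from `T` using the rules (Ref) and (Sim_i). -/
inductive ProvRS [DecidableEq Y] (T : Set (Fml Y)) : Fml Y → Prop
  | hyp {φ : Fml Y} : φ ∈ T → ProvRS T φ
  | ref (A : Finset (Y × ℤ)) : ProvRS T (A, A)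
  | simi {A B C D : Finset (Y × ℤ)} (i : ℤ) :
      ProvRS T (A, shiftF B i) → ProvRS T (C, D) →
      ProvRS T (A ∪ shiftF (C \ B) i, shiftF D i)

/-- The closure operator induced by a closure system `S`. -/
def closOp (S : Set (Set (Y × ℤ))) (M : Set (Y × ℤ)) : Set (Y × ℤ) :=
  ⋂₀ {N | N ∈ S ∧ M ⊆ N}

/-- The least time point occurring in a finite set (`0` for the empty set). -/
def lo (A : Finset (Y × ℤ)) : ℤ :=
  WithTop.untopD 0 (A.image Prod.snd).min

/-- The greatest time point occurring in a finite set (`0` for the empty set). -/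
def hi (A : Finset (Y × ℤ)) : ℤ :=
  WithBot.unbotD 0 (A.image Prod.snd).max

/-- A formula `A ⇒ B` is predictive if `A ≠ ∅`, `B ≠ ∅`, and every time point in
`A` is less than or equal to every time point in `B`. -/
def Predictive (φ : Fml Y) : Prop :=
  φ.1.Nonempty ∧ φ.2.Nonempty ∧ ∀ p ∈ φ.1, ∀ q ∈ φ.2, p.2 ≤ q.2

section

variable [DecidableEq Y]

@[simp]
lemma shiftF_empty (i : ℤ) : shiftF (∅ : Finset (Y × ℤ)) i = ∅ :=
  Finset.image_empty _

@[simp]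
lemma shiftF_zero (A : Finset (Y × ℤ)) : shiftF A 0 = A := by
  simp [shiftF]

lemma shiftF_union (A B : Finset (Y × ℤ)) (i : ℤ) :
    shiftF (A ∪ B) i = shiftF A i ∪ shiftF B i :=
  Finset.image_union _ _

lemma shiftF_shiftF (A : Finset (Y × ℤ)) (j i : ℤ) :
    shiftF (shiftF A j) i = shiftF A (j + i) := by
  simp [shiftF, Finset.image_image, Function.comp_def, add_assoc]

lemma shiftF_biUnion_shiftF (A : Finset (Y × ℤ)) (I : Finset ℤ) (i : ℤ) :
    shiftF (I.biUnion (shiftF A)) i = (I.image (· + i)).biUnion (shiftF A) := by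
  rw [Finset.image_biUnion]
  change Finset.image _ (I.biUnion (shiftF A)) = _
  rw [Finset.biUnion_image]
  exact Finset.biUnion_congr rfl fun j _ => shiftF_shiftF A j i

namespace Prov

variable {T : Set (Fml Y)} {A A' B C : Finset (Y × ℤ)}

lemma mono {T' : Set (Fml Y)} (hT : T ⊆ T') {φ : Fml Y} (h : Prov T φ) : Prov T' φ := by
  induction h with
  | hyp h => exact hyp (hT h)
  | ax A B => exact ax A B
  | cut _ _ ih₁ ih₂ => exact cut ih₁ ih₂
  | shf i _ ih => exact shf i ih

lemma weaken_left (h : Prov T (A, B)) (hA : A ⊆ A') : Prov T (A', B) := by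
  have h' : Prov T (A ∪ ∅, B) := by rwa [Finset.union_empty]
  simpa [Finset.union_eq_right.mpr hA] using cut (ax A A') h'

lemma refl (A : Finset (Y × ℤ)) : Prov T (A, A) := by
  simpa using ax (T := T) A ∅

lemma empty_right (A : Finset (Y × ℤ)) : Prov T (A, ∅) := by
  simpa using ax (T := T) ∅ A

lemma trans (h₁ : Prov T (A, B)) (h₂ : Prov T (B, C)) : Prov T (A, C) := by
  have h₂' : Prov T (B ∪ ∅, C) := by rwa [Finset.union_empty]
  simpa using cut h₁ h₂'

lemma union_right (h₁ : Prov T (A, B)) (h₂ : Prov T (A, C)) : Prov T (A, B ∪ C) := by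
  have hCB : Prov T (C ∪ B, B ∪ C) :=
    (refl (B ∪ C)).weaken_left (Finset.union_comm B C).le
  have hBA : Prov T (B ∪ A, B ∪ C) :=
    (cut h₂ hCB).weaken_left (Finset.union_comm A B).le
  exact (cut h₁ hBA).weaken_left (Finset.union_self A).le

lemma biUnion_right {ι : Type*} [DecidableEq ι] {s : Finset ι} {f : ι → Finset (Y × ℤ)}
    (h : ∀ i ∈ s, Prov T (A, f i)) : Prov T (A, s.biUnion f) := by
  induction s using Finset.induction_on with
  | empty => simpa using empty_right A
  | insert a s _ ih =>
    rw [Finset.biUnion_insert]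
    exact union_right (h a (s.mem_insert_self a))
      (ih fun i hi => h i (Finset.mem_insert_of_mem hi))

lemma exists_biUnion_shiftF_of_union_singleton {φ : Fml Y} (h : Prov (T ∪ {(∅, A)}) φ) :
    ∃ I : Finset ℤ, Prov T (φ.1 ∪ I.biUnion (shiftF A), φ.2) := by
  induction h with
  | hyp h =>
    rcases h with h | rfl
    · exact ⟨∅, by simpa using hyp h⟩
    · exact ⟨{0}, by simpa using refl A⟩
  | ax A' B' => exact ⟨∅, by simpa using ax A' B'⟩
  | @cut A' B' C' D' _ _ ih₁ ih₂ =>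
    obtain ⟨I₁, h₁⟩ := ih₁
    obtain ⟨I₂, h₂⟩ := ih₂
    refine ⟨I₁ ∪ I₂, ?_⟩
    rw [Finset.union_biUnion]
    set U₁ := I₁.biUnion (shiftF A)
    set U₂ := I₂.biUnion (shiftF A)
    have h₁' : Prov T (A' ∪ (U₁ ∪ U₂), B') := h₁.weaken_left (by grind)
    have h₂' : Prov T (B' ∪ (C' ∪ (U₁ ∪ U₂)), D') := h₂.weaken_left (by grind)
    exact (cut h₁' h₂').weaken_left (by grind)
  | @shf A' B' i _ ih =>
    obtain ⟨I, hI⟩ := ih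
    refine ⟨I.image (· + i), ?_⟩
    simpa only [shiftF_union, shiftF_biUnion_shiftF] using shf i hI

end Prov

lemma _root_.Finset.biUnion_univ_equivFin_symm {α β : Type*} [DecidableEq β] (I : Finset α)
    (f : α → Finset β) :
    (Finset.univ : Finset (Fin I.card)).biUnion (fun m => f (I.equivFin.symm m)) =
      I.biUnion f := by
  ext x
  simp only [Finset.mem_biUnion, Finset.mem_univ, true_and]
  exact ⟨fun ⟨m, hm⟩ => ⟨_, (I.equivFin.symm m).2, hm⟩,
    fun ⟨a, ha, hx⟩ => ⟨I.equivFin ⟨a, ha⟩, by simpa using hx⟩⟩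

end

theorem deduction_theorem_general [DecidableEq Y]
    (T : Set (Fml Y)) (A B : Finset (Y × ℤ)) :
    Prov (T ∪ {((∅ : Finset (Y × ℤ)), A)}) (∅, B) ↔
      ∃ (n : ℕ) (idx : Fin n → ℤ),
        Prov T ((Finset.univ : Finset (Fin n)).biUnion (fun m => shiftF A (idx m)), B) := by
  constructor
  · intro h
    obtain ⟨I, hI⟩ := h.exists_biUnion_shiftF_of_union_singleton
    refine ⟨I.card, fun m => I.equivFin.symm m, ?_⟩
    simpa [Finset.biUnion_univ_equivFin_symm] using hI
  · rintro ⟨n, idx, h⟩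
    have hA : Prov (T ∪ {(∅, A)}) (∅, A) := .hyp (Or.inr rfl)
    have hShifts : Prov (T ∪ {(∅, A)}) (∅, Finset.univ.biUnion fun m => shiftF A (idx m)) :=
      Prov.biUnion_right fun m _ => by simpa using hA.shf (idx m)
    exact hShifts.trans (h.mono Set.subset_union_left)

/-- Deduction theorem: `Σ ∪ {∅ ⇒ A} ⊢ ∅ ⇒ B` iff there are
`i_1, …, i_n ∈ ℤ` with `Σ ⊢ ⋃_{m=1}^n (A + i_m) ⇒ B`. -/
theorem deduction_theorem [DecidableEq Y] [Fintype Y] [Nonempty Y]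
    (T : Set (Fml Y)) (A B : Finset (Y × ℤ)) :
    Prov (T ∪ {((∅ : Finset (Y × ℤ)), A)}) (∅, B) ↔
      ∃ (n : ℕ) (idx : Fin n → ℤ),
        Prov T ((Finset.univ : Finset (Fin n)).biUnion (fun m => shiftF A (idx m)), B) :=
  deduction_theorem_general T A B

end TAI
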